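/- arXiv:1507.06984 — 7 statements merged into one kernel-verified Lean document; each statement's English description precedes it below -/
import Mathlib

section
/- With the setup of adding the 2-division point at the Weierstrass point (0,0) (f(x) = x^5 + a4 x^4 + a3 x^3 + a2 x^2 + a1 x, a1 ≠ 0, U | f - V^2, Û | f - V̂^2, f - (xṼ)^2 = x U Û, xṼ ≡ V mod U, xṼ ≡ -V̂ mod Û), the following relations hold: v̂0*u0 + v0*û0 = 0, and v0*v̂0 + a1*(a4 - u1 - û1) = 0. -/
open Polynomial

/-- In the setup of adding the 2-division point at (0,0), the glue
relations `v̂0 u0 + v0 û0 = 0` and `v0 v̂0 + a1 (a4 - u1 - û1) = 0` hold. -/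
theorem stmt2 (F : Type*) [Field F] (hchar : ringChar F ≠ 2)
    (a1 a2 a3 a4 u0 u1 v0 v1 uh0 uh1 vh0 vh1 : F)
    (f U V Uh Vh Vt : F[X])
    (hf : f = X ^ 5 + C a4 * X ^ 4 + C a3 * X ^ 3 + C a2 * X ^ 2 + C a1 * X)
    (hsq : Squarefree f) (ha1 : a1 ≠ 0)
    (hU : U = X ^ 2 + C u1 * X + C u0) (hV : V = C v1 * X + C v0)
    (hUh : Uh = X ^ 2 + C uh1 * X + C uh0) (hVh : Vh = C vh1 * X + C vh0)
    (hdU : U ∣ f - V ^ 2) (hdUh : Uh ∣ f - Vh ^ 2)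
    (hVt : Vt.degree ≤ 1)
    (hkey : f - (X * Vt) ^ 2 = X * U * Uh)
    (hc1 : U ∣ X * Vt - V) (hc2 : Uh ∣ X * Vt + Vh) :
    vh0 * u0 + v0 * uh0 = 0 ∧ v0 * vh0 + a1 * (a4 - u1 - uh1) = 0 := by
  set t1 := Vt.coeff 1 with ht1
  set t0 := Vt.coeff 0 with ht0
  have hVt' : Vt = C t1 * X + C t0 := eq_X_add_C_of_degree_le_one hVt
  have hUdeg : U.degree = 2 := by rw [hU]; compute_degree!
  have hUhdeg : Uh.degree = 2 := by rw [hUh]; compute_degree!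
  -- relation from hc1
  have h1 : C (t0 - v1 - t1 * u1) * X + C (-v0 - t1 * u0) = 0 := by
    apply Polynomial.eq_zero_of_dvd_of_degree_lt (p := U)
    · have h : C (t0 - v1 - t1 * u1) * X + C (-v0 - t1 * u0)
          = (X * Vt - V) - C t1 * U := by
        rw [hVt', hV, hU]
        simp only [map_sub, map_add, map_mul, map_neg]
        ring
      rw [h]
      exact dvd_sub hc1 (Dvd.intro_left _ rfl)
    · rw [hUdeg]
      exact lt_of_le_of_lt degree_linear_le (by norm_num)
  -- relation from hc2
  have h2 : C (t0 + vh1 - t1 * uh1) * X + C (vh0 - t1 * uh0) = 0 := by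
    apply Polynomial.eq_zero_of_dvd_of_degree_lt (p := Uh)
    · have h : C (t0 + vh1 - t1 * uh1) * X + C (vh0 - t1 * uh0)
          = (X * Vt + Vh) - C t1 * Uh := by
        rw [hVt', hVh, hUh]
        simp only [map_sub, map_add, map_mul]
        ring
      rw [h]
      exact dvd_sub hc2 (Dvd.intro_left _ rfl)
    · rw [hUhdeg]
      exact lt_of_le_of_lt degree_linear_le (by norm_num)
  have hv0 : v0 = -(t1 * u0) := by
    have h := congrArg (fun p => p.coeff 0) h1
    simp at h
    linear_combination -h
  have hvh0 : vh0 = t1 * uh0 := by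
    have h := congrArg (fun p => p.coeff 0) h2
    simp at h
    linear_combination h
  -- coefficient relations from hkey
  have hk : (X ^ 5 + C a4 * X ^ 4 + C a3 * X ^ 3 + C a2 * X ^ 2 + C a1 * X : F[X])
      - (X * (C t1 * X + C t0)) ^ 2
      = X * (X ^ 2 + C u1 * X + C u0) * (X ^ 2 + C uh1 * X + C uh0) := by
    rw [← hf, ← hU, ← hUh, ← hVt']; exact hkey
  have hk' : (C 1 * X ^ 5 + C (a4 - t1 ^ 2) * X ^ 4 + C (a3 - 2 * t1 * t0) * X ^ 3
        + C (a2 - t0 ^ 2) * X ^ 2 + C a1 * X : F[X])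
      = C 1 * X ^ 5 + C (u1 + uh1) * X ^ 4 + C (u0 + uh0 + u1 * uh1) * X ^ 3
        + C (u1 * uh0 + uh1 * u0) * X ^ 2 + C (u0 * uh0) * X := by
    simp only [map_sub, map_add, map_mul, map_pow, map_ofNat, C_1]
    linear_combination hk
  have h4 := congrArg (fun p => p.coeff 4) hk'
  have hA1 := congrArg (fun p => p.coeff 1) hk'
  simp only [coeff_add, coeff_sub, coeff_mul_X_pow', ← C_pow, ← C_mul, coeff_C] at h4 hA1
  norm_num at h4 hA1
  constructor
  · rw [hv0, hvh0]; ring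
  · rw [hv0, hvh0]; linear_combination a1 * h4 + t1 ^ 2 * hA1
end

section
/- With the setup of adding the 2-division point at (0,0) (f(x) = x^5 + a4 x^4 + a3 x^3 + a2 x^2 + a1 x with a1 ≠ 0, u0 ≠ 0, û0 ≠ 0, u0*û0 = a1, v̂0*u0 + v0*û0 = 0, and the quotient conditions f - (xṼ)^2 = x U Û with xṼ ≡ V mod U and xṼ ≡ -V̂ mod Û), the relations û0*(v1 + v̂1) + v̂0*(u1 - û1) = 0 and u0*(v1 + v̂1) + v0*(û1 - u1) = 0 hold. -/
open Polynomial

lemma aux {F : Type*} [Field F] {U p : F[X]} (hm : U.Monic) (hd : U.degree = 2)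
    (hdvd : U ∣ p) (hp : p.degree ≤ 2) : ∃ c : F, p = C c * U := by
  obtain ⟨q, hq⟩ := hdvd
  have hmul : p.degree = 2 + q.degree := by
    rw [hq, mul_comm, hm.degree_mul, hd, add_comm]
  have hdq : q.degree ≤ 0 := by
    have h2 : (2 : WithBot ℕ) + q.degree ≤ 2 + 0 := by
      rw [← hmul]; simpa using hp
    exact (WithBot.add_le_add_iff_left (by norm_num : (2 : WithBot ℕ) ≠ ⊥)).mp h2
  refine ⟨q.coeff 0, ?_⟩
  rw [hq, eq_C_of_degree_le_zero hdq]
  simp [mul_comm]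

/-- In the setup of adding the 2-division point at (0,0), with
`u0 ≠ 0`, `û0 ≠ 0`, `u0 û0 = a1` and `v̂0 u0 + v0 û0 = 0`, the relations
`û0 (v1 + v̂1) + v̂0 (u1 - û1) = 0` and `u0 (v1 + v̂1) + v0 (û1 - u1) = 0` hold. -/
theorem stmt3 (F : Type*) [Field F] (hchar : ringChar F ≠ 2)
    (a1 a2 a3 a4 u0 u1 v0 v1 uh0 uh1 vh0 vh1 : F)
    (f U V Uh Vh Vt : F[X])
    (hf : f = X ^ 5 + C a4 * X ^ 4 + C a3 * X ^ 3 + C a2 * X ^ 2 + C a1 * X)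
    (ha1 : a1 ≠ 0) (hu0 : u0 ≠ 0) (huh0 : uh0 ≠ 0)
    (hprod : u0 * uh0 = a1) (hg2 : vh0 * u0 + v0 * uh0 = 0)
    (hU : U = X ^ 2 + C u1 * X + C u0) (hV : V = C v1 * X + C v0)
    (hUh : Uh = X ^ 2 + C uh1 * X + C uh0) (hVh : Vh = C vh1 * X + C vh0)
    (hVt : Vt.degree ≤ 1)
    (hkey : f - (X * Vt) ^ 2 = X * U * Uh)
    (hc1 : U ∣ X * Vt - V) (hc2 : Uh ∣ X * Vt + Vh) :
    uh0 * (v1 + vh1) + vh0 * (u1 - uh1) = 0 ∧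
      u0 * (v1 + vh1) + v0 * (uh1 - u1) = 0 := by
  have hXVt : (X * Vt : F[X]).degree ≤ 2 := by
    calc (X * Vt : F[X]).degree ≤ (X : F[X]).degree + Vt.degree := degree_mul_le _ _
      _ ≤ 1 + 1 := by
          exact add_le_add (by simpa using degree_X_le) hVt
      _ = 2 := by norm_num
  have hUm : U.Monic := by rw [hU]; monicity!
  have hUd : U.degree = 2 := by rw [hU]; compute_degree!
  have hUhm : Uh.Monic := by rw [hUh]; monicity!
  have hUhd : Uh.degree = 2 := by rw [hUh]; compute_degree!
  obtain ⟨c, hc⟩ := aux hUm hUd hc1 (le_trans (degree_sub_le _ _)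
    (max_le hXVt (by rw [hV]; exact le_trans (degree_linear_le) (by norm_num))))
  obtain ⟨d, hd⟩ := aux hUhm hUhd hc2 (le_trans (degree_add_le _ _)
    (max_le hXVt (by rw [hVh]; exact le_trans (degree_linear_le) (by norm_num))))
  rw [hU, hV] at hc
  rw [hUh, hVh] at hd
  have e0 := congrArg (fun p : F[X] => p.coeff 0) hc
  have e1 := congrArg (fun p : F[X] => p.coeff 1) hc
  have e2 := congrArg (fun p : F[X] => p.coeff 2) hc
  have g0 := congrArg (fun p : F[X] => p.coeff 0) hd
  have g1 := congrArg (fun p : F[X] => p.coeff 1) hd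
  have g2 := congrArg (fun p : F[X] => p.coeff 2) hd
  simp only [coeff_sub, coeff_add, coeff_X_mul, coeff_C_mul, coeff_X_pow, coeff_C,
    coeff_X, mul_coeff_zero, coeff_zero] at e0 e1 e2 g0 g1 g2
  norm_num at e0 e1 e2 g0 g1 g2
  constructor
  · linear_combination (-uh0) * e1 + uh0 * g1 + (u1 - uh1) * g0 + uh0 * u1 * (e2 - g2)
  · linear_combination (-u0) * e1 + u0 * g1 + (u1 - uh1) * e0 + u0 * uh1 * (e2 - g2)
end

section
/- Let F be a field with a1 ≠ 0 and suppose the quadruples s=(u0,u1,v0,v1) and ŝ=(û0,û1,v̂0,v̂1) satisfy the five glue relations g1 = u0û0 - a1 = 0, g2 = v̂0u0 + v0û0 = 0, g3 = v0v̂0 + a1(a4 - u1 - û1) = 0, g4 = û0(v1+v̂1) + v̂0(u1-û1) = 0, g5 = u0(v1+v̂1) + v0(û1-u1) = 0, together with e0(s) = e1(s) = 0 (the affine Jacobian equations for f(x)=x^5+a4x^4+a3x^3+a2x^2+a1x). Then g6 = -a1*a3 + a1*û0 + a1*u0 + a1*û1*u1 - 2*u1*v̂0*v0 - 2*û0*v0*v1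 = 0. -/
/-- From the five glue relations `g1,…,g5` together with the
affine Jacobian equations `e0 = e1 = 0` (for `f(x)=x^5+a4x^4+a3x^3+a2x^2+a1x`,
`a1 ≠ 0`), the relation `g6 = 0` follows. -/
theorem stmt5 (F : Type*) [Field F]
    (a1 a2 a3 a4 u0 u1 v0 v1 uh0 uh1 vh0 vh1 : F)
    (ha1 : a1 ≠ 0)
    (hg1 : u0*uh0 - a1 = 0)
    (hg2 : vh0*u0 + v0*uh0 = 0)
    (hg3 : v0*vh0 + a1*(a4 - u1 - uh1) = 0)
    (hg4 : uh0*(v1 + vh1) + vh0*(u1 - uh1) = 0)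
    (hg5 : u0*(v1 + vh1) + v0*(uh1 - u1) = 0)
    (he0 : -(a2*u0) + a4*u0^2 + a3*u0*u1 - 2*u0^2*u1 - a4*u0*u1^2 + u0*u1^3
            - v0^2 + u0*v1^2 = 0)
    (he1 : a1 - a3*u0 + u0^2 - a2*u1 + 2*a4*u0*u1 + a3*u1^2 - 3*u0*u1^2
            - a4*u1^3 + u1^4 - 2*v0*v1 + u1*v1^2 = 0) :
    -(a1*a3) + a1*uh0 + a1*u0 + a1*uh1*u1 - 2*u1*vh0*v0 - 2*uh0*v0*v1 = 0 := by
  have hu0 : u0 ≠ 0 := fun h => ha1 (by linear_combination uh0*h - hg1)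
  have key : (-(a1*a3) + a1*uh0 + a1*u0 + a1*uh1*u1 - 2*u1*vh0*v0 - 2*uh0*v0*v1)
      * u0^2 = 0 := by
    linear_combination (a1*u0 + u1*v0^2 - 2*u0*v0*v1) * hg1 - u0*u1*v0 * hg2
      - u0^2*u1 * hg3 + a1*u0 * he1 - a1*u1 * he0
  exact (mul_eq_zero.mp key).resolve_right (pow_ne_zero 2 hu0)
end

section
/- Let F be a field of characteristic not 2 and f(x) a monic quintic over F with no repeated roots and f(0)=0, so f(x) = x^5+a4x^4+a3x^3+a2x^2+a1x with a1 ≠ 0. Suppose (u0,u1,v0,v1) ∈ F^4 satisfies e0 = 0 and e1 = 0 (the affine equations for Jac(C)-Θ with a0=0) and u0 = 0. Then v0 = 0, u1 ≠ 0, and the point (-u1, u1*v1) lies on the affine curve y^2 = f(x) and is not equal to (0,0). -/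
open Polynomial

/-- With `f(x) = x^5+a4x^4+a3x^3+a2x^2+a1x` squarefree (`a1 ≠ 0`),
if `(u0,u1,v0,v1)` satisfies the affine equations `e0 = e1 = 0` and `u0 = 0`,
then `v0 = 0`, `u1 ≠ 0`, and `(-u1, u1 v1)` is an affine point of `y^2 = f(x)`
different from `(0,0)`. -/
theorem stmt7 (F : Type*) [Field F] (hchar : ringChar F ≠ 2)
    (a1 a2 a3 a4 : F) (f : F[X])
    (hf : f = X ^ 5 + C a4 * X ^ 4 + C a3 * X ^ 3 + C a2 * X ^ 2 + C a1 * X)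
    (hsq : Squarefree f) (ha1 : a1 ≠ 0)
    (u0 u1 v0 v1 : F)
    (he0 : -(a2*u0) + a4*u0^2 + a3*u0*u1 - 2*u0^2*u1 - a4*u0*u1^2 + u0*u1^3
            - v0^2 + u0*v1^2 = 0)
    (he1 : a1 - a3*u0 + u0^2 - a2*u1 + 2*a4*u0*u1 + a3*u1^2 - 3*u0*u1^2
            - a4*u1^3 + u1^4 - 2*v0*v1 + u1*v1^2 = 0)
    (hu0 : u0 = 0) :
    v0 = 0 ∧ u1 ≠ 0 ∧ (u1*v1)^2 = f.eval (-u1) ∧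
      ((-u1, u1*v1) : F × F) ≠ (0, 0) := by
  subst hu0
  have hv0 : v0 = 0 := by
    have : v0 ^ 2 = 0 := by linear_combination -he0
    exact pow_eq_zero_iff (n := 2) (by norm_num) |>.mp this
  subst hv0
  have he1' : a1 - a2*u1 + a3*u1^2 - a4*u1^3 + u1^4 + u1*v1^2 = 0 := by
    linear_combination he1
  have hu1 : u1 ≠ 0 := by
    intro h; subst h; simp at he1'; exact ha1 he1'
  refine ⟨rfl, hu1, ?_, ?_⟩
  · subst hf
    simp only [eval_add, eval_mul, eval_pow, eval_C, eval_X]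
    linear_combination u1 * he1'
  · intro h
    have := congrArg Prod.fst h
    simp at this
    exact hu1 this
end

section
/- Let C be a genus 2 hyperelliptic curve over an algebraically closed field of characteristic not 2, and for Q ∈ C let Θ_Q = { Cl(P - Q) : P ∈ C } ⊂ Pic^0(C). If Q1 ≠ Q2 are points of C, then Θ_{Q1} ∩ Θ_{Q2} = { 0, Cl(ι(Q1) - Q2) }, where ι is the hyperelliptic involution. -/
open Polynomial

/-- Let `C : y^2 = f(x)` be a genus 2 curve (points: affine points
plus `none` = P∞), `ι` the hyperelliptic involution, and `a : C → Pic⁰(C)` the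
Abel–Jacobi map `P ↦ Cl(P - P∞)`, so that `Cl(P - Q) = a P - a Q` and
`Θ_Q = {a P - a Q : P ∈ C}`.  Assuming the key facts that `a P∞ = 0`, that
`P + ι P - 2 P∞` is principal (`a P + a (ι P) = 0`), and that divisor classes of
reduced divisors are represented uniquely, the intersection
`Θ_{Q1} ∩ Θ_{Q2}` for `Q1 ≠ Q2` is exactly `{0, Cl(ι Q1 - Q2)}`. -/
theorem stmt12 (F : Type*) [Field F] [IsAlgClosed F] (hchar : ringChar F ≠ 2)
    (f : F[X]) (hm : f.Monic) (hdeg : f.natDegree = 5) (hsq : Squarefree f)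
    (Pic : Type*) [AddCommGroup Pic]
    (a : Option {p : F × F // p.2 ^ 2 = f.eval p.1} → Pic)
    (ι : Option {p : F × F // p.2 ^ 2 = f.eval p.1} →
         Option {p : F × F // p.2 ^ 2 = f.eval p.1})
    (hι : ι = Option.map fun q => ⟨(q.1.1, -q.1.2), by simpa using q.2⟩)
    (hinf : a none = 0)
    (hinvol : ∀ P, a P + a (ι P) = 0)
    -- uniqueness of reduced-divisor representation: a pair `{P1,P2}` is
    -- reduced if no two affine points in it are involutes of each other
    (huniq : ∀ P1 P2 P3 P4,
      (P1 = none ∨ P2 = none ∨ ι P1 ≠ P2) →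
      (P3 = none ∨ P4 = none ∨ ι P3 ≠ P4) →
      a P1 + a P2 = a P3 + a P4 →
      ({P1, P2} : Multiset (Option {p : F × F // p.2 ^ 2 = f.eval p.1}))
        = {P3, P4})
    (Q1 Q2 : Option {p : F × F // p.2 ^ 2 = f.eval p.1}) (hQ : Q1 ≠ Q2) :
    {x : Pic | ∃ P, x = a P - a Q1} ∩ {x : Pic | ∃ P, x = a P - a Q2}
      = {0, a (ι Q1) - a Q2} := by
  ext x
  simp only [Set.mem_inter_iff, Set.mem_setOf_eq, Set.mem_insert_iff,
    Set.mem_singleton_iff]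
  have hiQ1 : a (ι Q1) = -a Q1 := eq_neg_of_add_eq_zero_right (hinvol Q1)
  constructor
  · rintro ⟨⟨P, rfl⟩, ⟨P', hP'⟩⟩
    by_cases h1 : ι P = Q2
    · right
      have hP : a P = -a Q2 := by
        have := hinvol P; rw [h1] at this
        exact eq_neg_of_add_eq_zero_left this
      rw [hP, hiQ1]; abel
    · by_cases h2 : ι P' = Q1
      · right
        have hP : a P' = -a Q1 := by
          have := hinvol P'; rw [h2] at this
          exact eq_neg_of_add_eq_zero_left this
        rw [hP', hP, hiQ1]
      · left
        have heq : a P + a Q2 = a P' + a Q1 := by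
          rw [← sub_eq_sub_iff_add_eq_add]; exact hP'
        have hmeq := huniq P Q2 P' Q1 (Or.inr (Or.inr h1)) (Or.inr (Or.inr h2)) heq
        have hQ2 : Q2 ∈ ({P', Q1} : Multiset _) := by
          rw [← hmeq]; simp
        have hPQ2 : P' = Q2 := by
          rcases Multiset.mem_cons.mp hQ2 with h | h
          · exact h.symm
          · exact absurd (Multiset.mem_singleton.mp h) hQ.symm
        rw [hPQ2] at hmeq
        rw [Multiset.pair_comm P Q2] at hmeq
        have : P = Q1 :=
          Multiset.singleton_inj.mp (Multiset.cons_inj_right Q2 |>.mp hmeq)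
        rw [this]; abel
  · rintro (rfl | rfl)
    · exact ⟨⟨Q1, (sub_self _).symm⟩, ⟨Q2, (sub_self _).symm⟩⟩
    · refine ⟨⟨ι Q2, ?_⟩, ⟨ι Q1, rfl⟩⟩
      have hiQ2 : a (ι Q2) = -a Q2 := eq_neg_of_add_eq_zero_right (hinvol Q2)
      rw [hiQ1, hiQ2]; abel
end

section
/- Let D = Σ_{i=1}^k P_i - k·P∞ be a semi-reduced divisor on the hyperelliptic curve y^2 = f(x) (f monic of degree 2g+1, no repeated roots, char ≠ 2). Let U(x) = Π(x - x(P_i)) and let V(x) be the polynomial of degree < k interpolating the y-coordinates (with appropriate multiplicities). Then U(x) divides f(x) - V(x)^2, so there exists a unique polynomial W(x) with f(x) = V(x)^2 + U(x)·W(x). -/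
open Polynomial

/-- For a semi-reduced divisor `D = Σ P_i - k·P∞` on the
hyperelliptic curve `y^2 = f(x)` (`f` monic of degree `2g+1`, squarefree,
char ≠ 2; here with distinct affine points, encoded by distinct
x-coordinates), if `U = Π (x - x(P_i))` and `V` has degree `< k` and
interpolates the y-coordinates, then `U ∣ f - V^2`; hence there is a unique
`W` with `f = V^2 + U·W`. -/
theorem stmt14 (F : Type*) [Field F] (hchar : ringChar F ≠ 2)
    (g : ℕ) (f : F[X]) (hm : f.Monic) (hdeg : f.natDegree = 2 * g + 1)
    (hsq : Squarefree f)
    (k : ℕ) (P : Fin k → F × F)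
    (honcurve : ∀ i, (P i).2 ^ 2 = f.eval (P i).1)
    (hsemired : Function.Injective fun i => (P i).1)
    (U V : F[X])
    (hU : U = ∏ i : Fin k, (X - C (P i).1))
    (hVdeg : V.degree < (k : ℕ))
    (hVint : ∀ i, V.eval (P i).1 = (P i).2) :
    U ∣ f - V ^ 2 ∧ ∃! W : F[X], f = V ^ 2 + U * W := by
  have hdvd : U ∣ f - V ^ 2 := by
    rw [hU]
    apply Finset.prod_dvd_of_coprime
    · intro i _ j _ hij
      exact (Polynomial.pairwise_coprime_X_sub_C hsemired hij)
    · intro i _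
      rw [dvd_iff_isRoot, IsRoot, eval_sub, eval_pow, hVint i, ← honcurve i]
      ring
  have hU0 : U ≠ 0 := by
    rw [hU]
    exact Monic.ne_zero (monic_prod_of_monic _ _ fun i _ => monic_X_sub_C _)
  refine ⟨hdvd, ?_⟩
  obtain ⟨W, hW⟩ := hdvd
  refine ⟨W, by linear_combination hW, fun W' hW' => ?_⟩
  have : U * W' = U * W := by rw [← hW]; linear_combination -hW'
  exact mul_left_cancel₀ hU0 this
end

section
/- For the Segre embedding σ: ℙ^m × ℙ^n → ℙ^{(m+1)(n+1)-1} given by z_{i,j} = x_i * y_j, a point (z_{i,j}) of ℙ^{(m+1)(n+1)-1} lies in the image of σ if and only if z_{i,j} * z_{k,l} = z_{i,l} * z_{k,j} for all 0 ≤ i,k ≤ m and 0 ≤ j,l ≤ n. -/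
/-- A point `z` of `ℙ^{(m+1)(n+1)-1}` (with homogeneous
coordinates indexed by pairs `(i,j)`) lies in the image of the Segre embedding
`σ : ℙ^m × ℙ^n → ℙ^{(m+1)(n+1)-1}`, `z_{i,j} = x_i y_j`, if and only if
`z_{i,j} z_{k,l} = z_{i,l} z_{k,j}` for all `i,k,j,l`. -/
theorem stmt15 (K : Type*) [Field K] (m n : ℕ)
    (z : Projectivization K (Fin (m + 1) × Fin (n + 1) → K)) :
    (∃ (x : Fin (m + 1) → K) (y : Fin (n + 1) → K),
        ∀ p : Fin (m + 1) × Fin (n + 1), z.rep p = x p.1 * y p.2) ↔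
      (∀ (i k : Fin (m + 1)) (j l : Fin (n + 1)),
        z.rep (i, j) * z.rep (k, l) = z.rep (i, l) * z.rep (k, j)) := by
  constructor
  · rintro ⟨x, y, h⟩ i k j l
    simp only [h (i, j), h (k, l), h (i, l), h (k, j)]
    ring
  · intro h
    have hz : z.rep ≠ 0 := z.rep_nonzero
    obtain ⟨⟨i0, j0⟩, hp⟩ := Function.ne_iff.mp hz
    simp only [Pi.zero_apply] at hp
    refine ⟨fun i => z.rep (i, j0), fun j => z.rep (i0, j) / z.rep (i0, j0), ?_⟩
    rintro ⟨i, j⟩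
    field_simp
    rw [mul_comm (z.rep (i, j))]
    rw [(h i0 i j j0).symm]; ring
end
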